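/- For finite sets A, B, C over a common type, the Jaccard distance d(A, B) = 1 − |A ∩ B| / |A ∪ B| satisfies the triangle inequality: d(A, C) ≤ d(A, B) + d(B, C), where d(∅, ∅) = 0. -/

import Mathlib

/-!
Write the Jaccard distance as `|A ∆ C| / |A ∪ C|`. Each of the `k` elements of `B` outside
`A ∪ C` lies in both `A ∆ B` and `B ∆ C`, so `|A ∆ B| + |B ∆ C| ≥ |A ∆ C| + 2k`. Dividing
`|A ∆ B|` and `|B ∆ C|` by the larger `|A ∪ B ∪ C| = |A ∪ C| + k` only decreases them, and
`|A ∆ C| / |A ∪ C| ≤ (|A ∆ C| + 2k) / (|A ∪ C| + k)` because `|A ∆ C| ≤ |A ∪ C|`.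
-/

open Finset
open scoped symmDiff

section Arithmetic

variable {K : Type*} [Field K] [LinearOrder K] [IsStrictOrderedRing K] {a b c : K}

lemma div_le_div_of_le_of_le (ha : 0 ≤ a) (hab : a ≤ b) (hbc : b ≤ c) : a / c ≤ a / b := by
  rcases hab.lt_or_eq with hab | rfl
  · exact div_le_div_of_nonneg_left ha (ha.trans_lt hab) hbc
  · rcases ha.lt_or_eq with ha | rfl
    · exact div_le_div_of_nonneg_left ha.le ha hbc
    · simp

lemma div_le_add_div_add (ha : 0 ≤ a) (hab : a ≤ b) (hc : 0 ≤ c) :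
    a / b ≤ (a + c) / (b + c) := by
  rcases ha.lt_or_eq with ha | rfl
  · have hb : 0 < b := ha.trans_le hab
    rw [div_le_div_iff₀ hb (by positivity)]
    nlinarith
  · simp only [zero_div, zero_add]
    positivity

end Arithmetic

namespace Finset

variable {α : Type*} [DecidableEq α]

lemma card_symmDiff_add_card_inter (s t : Finset α) : #(s ∆ t) + #(s ∩ t) = #(s ∪ t) := by
  rw [symmDiff_eq_sup_sdiff_inf]
  exact card_sdiff_add_card_eq_card inter_subset_union

lemma card_symmDiff_add_two_mul_card_sdiff_le (s t u : Finset α) :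
    #(s ∆ u) + 2 * #(t \ (s ∪ u)) ≤ #(s ∆ t) + #(t ∆ u) := by
  set x := t \ (s ∪ u)
  have hdisj : Disjoint (s ∆ u) x :=
    disjoint_left.2 fun a ha hx => (mem_sdiff.1 hx).2 (symmDiff_le_sup (α := Finset α) ha)
  have hinter : x ⊆ s ∆ t ∩ t ∆ u := fun a hx => by
    simp only [x, mem_sdiff, mem_union, not_or] at hx
    simp [mem_symmDiff, hx]
  have hunion : s ∆ u ∪ x ⊆ s ∆ t ∪ t ∆ u :=
    union_subset (symmDiff_triangle s t u) (hinter.trans inter_subset_union)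
  calc #(s ∆ u) + 2 * #x = #(s ∆ u ∪ x) + #x := by rw [card_union_of_disjoint hdisj]; ring
    _ ≤ #(s ∆ t ∪ t ∆ u) + #(s ∆ t ∩ t ∆ u) :=
        add_le_add (card_le_card hunion) (card_le_card hinter)
    _ = #(s ∆ t) + #(t ∆ u) := card_union_add_card_inter _ _

end Finset

section Jaccard

variable {α : Type*} [DecidableEq α]

/-- At `s = t = ∅` this is `0 / 0 = 0`. -/
def jaccardDist (s t : Finset α) : ℚ := #(s ∆ t) / #(s ∪ t)

lemma jaccardDist_eq_ite (s t : Finset α) :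
    jaccardDist s t = if s ∪ t = ∅ then 0 else 1 - (#(s ∩ t) : ℚ) / #(s ∪ t) := by
  split_ifs with h
  · simp [jaccardDist, h]
  · have hpos : (0 : ℚ) < #(s ∪ t) := by
      exact_mod_cast card_pos.2 (nonempty_iff_ne_empty.2 h)
    rw [jaccardDist, eq_sub_iff_add_eq, ← add_div, div_eq_one_iff_eq hpos.ne',
      ← card_symmDiff_add_card_inter, Nat.cast_add]

lemma jaccardDist_le_card_symmDiff_div (s t : Finset α) {u : Finset α} (h : s ∪ t ⊆ u) :
    (#(s ∆ t) : ℚ) / #u ≤ jaccardDist s t :=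
  div_le_div_of_le_of_le (by positivity)
    (by exact_mod_cast card_le_card symmDiff_le_sup) (by exact_mod_cast card_le_card h)

theorem jaccardDist_triangle (s t u : Finset α) :
    jaccardDist s u ≤ jaccardDist s t + jaccardDist t u := by
  have hcard : (#(t ∪ (s ∪ u)) : ℚ) = #(s ∪ u) + #(t \ (s ∪ u)) := by
    rw [← card_sdiff_add_card, Nat.cast_add, add_comm]
  have hcount : (#(s ∆ u) : ℚ) + 2 * #(t \ (s ∪ u)) ≤ (#(s ∆ t) : ℚ) + #(t ∆ u) := by
    exact_mod_cast card_symmDiff_add_two_mul_card_sdiff_le s t u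
  set k : ℚ := (#(t \ (s ∪ u)) : ℚ)
  have hk : 0 ≤ k := by positivity
  have hsu : (#(s ∆ u) : ℚ) ≤ #(s ∪ u) := by exact_mod_cast card_le_card symmDiff_le_sup
  calc jaccardDist s u
      ≤ (#(s ∆ u) + k) / (#(s ∪ u) + k) := div_le_add_div_add (by positivity) hsu hk
    _ ≤ (#(s ∆ u) + 2 * k) / (#(s ∪ u) + k) := by gcongr; linarith
    _ ≤ (#(s ∆ t) + #(t ∆ u)) / (#(s ∪ u) + k) := by gcongr
    _ = (#(s ∆ t) : ℚ) / #(t ∪ (s ∪ u)) + (#(t ∆ u) : ℚ) / #(t ∪ (s ∪ u)) := by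
        rw [hcard, add_div]
    _ ≤ jaccardDist s t + jaccardDist t u := by
        gcongr <;> apply jaccardDist_le_card_symmDiff_div <;> grind

end Jaccard

/-- The Jaccard distance `d(A, B) = 1 − |A ∩ B| / |A ∪ B|` (with `d(∅, ∅) = 0`)
satisfies the triangle inequality. -/
theorem jaccard_distance_triangle
    {α : Type*} [DecidableEq α]
    (d : Finset α → Finset α → ℚ)
    (hd : ∀ A B : Finset α,
      d A B = if A ∪ B = ∅ then 0
        else 1 - ((A ∩ B).card : ℚ) / ((A ∪ B).card : ℚ)) :
    ∀ A B C : Finset α, d A C ≤ d A B + d B C := by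
  obtain rfl : d = jaccardDist :=
    funext₂ fun A B => (hd A B).trans (jaccardDist_eq_ite A B).symm
  exact jaccardDist_triangle
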